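/- Fix N ≥ 1 and constants η, η' with η/√N > η' > 1, and let Ω ⊂ ℝ^N be an open domain with ∂Ω ≠ ∅. Let 𝒬 be the set of dyadic cubes Q with Q_η ⊂ Ω and Q̃_η ⊄ Ω (Q̃ the dyadic parent of Q). Then, with c₆ := √N (2η + 1 + η')/(η − η'√N), the following holds: if Q(x, s) and Q'(x', s') belong to 𝒬, the dilated cubes Q(x, η's) and Q'(x', η's') intersect, and s < s', then s < s' < c₆ s. -/

import Mathlib

/-!
The parent `Q̃` of `Q = Q(x, s)` has its `η`-dilate inside `Q((2η + 1)s)`, and if the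
`η'`-dilates of `Q` and `Q' = Q'(x', s')` meet, `Q̃_η` lies inside
`Q'((2η + 1 + η')s + η's')`. Since `Q̃_η ⊄ Ω ⊇ Q'_η`, this cube is not contained in
`Q'(ηs')`, whence `(η - η')s' < (2η + 1 + η')s`; the constant `c₆` is a cruder form of
this bound.
-/

open MeasureTheory Real Metric
open scoped ENNReal NNReal

noncomputable section

/-- `cube x s` is the closed cube of center `x` and side `s`, i.e. the closed
`ℓ^∞`-ball of radius `s/2` around `x`. -/
def cube {N : ℕ} (x : EuclideanSpace ℝ (Fin N)) (s : ℝ) : Set (EuclideanSpace ℝ (Fin N)) :=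
  {y | ∀ i, |y i - x i| ≤ s / 2}

/-- Center of the dyadic cube `[0, 2^{-k}]^N + m·2^{-k}` of generation `k ∈ ℤ`. -/
def dyCenter (N : ℕ) (k : ℤ) (m : Fin N → ℤ) : EuclideanSpace ℝ (Fin N) :=
  WithLp.toLp 2 (fun i => ((m i : ℝ) + 1 / 2) * (2 : ℝ) ^ (-k))

/-- Side length `2^{-k}` of a dyadic cube of generation `k`. -/
def dySide (k : ℤ) : ℝ := (2 : ℝ) ^ (-k)

/-- Index of the dyadic parent: the dyadic cube of generation `k` and index `m` is
contained in the unique dyadic cube of generation `k - 1` with index `fun i => ⌊m i / 2⌋`. -/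
def dyParentIdx {N : ℕ} (m : Fin N → ℤ) : Fin N → ℤ := fun i => Int.fdiv (m i) 2

/-- The dyadic cube of generation `k` and index `m` belongs to the Whitney family `𝒬`
for `Ω` (with dilation parameter `η`): its dilate `Q_η` is contained in `Ω`, while the
dilate `Q̃_η` of its dyadic parent is not. -/
def memQcal {N : ℕ} (Ω : Set (EuclideanSpace ℝ (Fin N))) (η : ℝ) (k : ℤ) (m : Fin N → ℤ) :
    Prop :=
  cube (dyCenter N k m) (η * dySide k) ⊆ Ω ∧
  ¬ cube (dyCenter N (k - 1) (dyParentIdx m)) (η * dySide (k - 1)) ⊆ Ω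

section Cube

variable {N : ℕ}

theorem cube_mono (x : EuclideanSpace ℝ (Fin N)) {s t : ℝ} (h : s ≤ t) :
    cube x s ⊆ cube x t :=
  fun _ hy i => (hy i).trans (by linarith)

theorem cube_subset_cube {x x' : EuclideanSpace ℝ (Fin N)} {s t : ℝ}
    (h : ∀ i, |x i - x' i| ≤ (t - s) / 2) : cube x s ⊆ cube x' t := by
  intro y hy i
  calc |y i - x' i| ≤ |y i - x i| + |x i - x' i| := abs_sub_le _ _ _
    _ ≤ s / 2 + (t - s) / 2 := add_le_add (hy i) (h i)
    _ = t / 2 := by ring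

theorem cube_subset_cube_of_inter_nonempty {x x' : EuclideanSpace ℝ (Fin N)} {a a' : ℝ}
    (h : (cube x a ∩ cube x' a').Nonempty) (b : ℝ) : cube x b ⊆ cube x' (b + a + a') := by
  obtain ⟨y, hy, hy'⟩ := h
  refine cube_subset_cube fun i => ?_
  calc |x i - x' i| ≤ |x i - y i| + |y i - x' i| := abs_sub_le _ _ _
    _ = |y i - x i| + |y i - x' i| := by rw [abs_sub_comm (x i)]
    _ ≤ a / 2 + a' / 2 := add_le_add (hy i) (hy' i)
    _ = (b + a + a' - b) / 2 := by ring

end Cube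

theorem dySide_pos (k : ℤ) : 0 < dySide k := zpow_pos two_pos _

theorem dySide_sub_one (k : ℤ) : dySide (k - 1) = 2 * dySide k := by
  rw [dySide, dySide, neg_sub, sub_eq_neg_add, zpow_add₀ two_ne_zero, zpow_one, mul_comm]

theorem abs_dyCenter_parent_sub_le (N : ℕ) (k : ℤ) (m : Fin N → ℤ) (i : Fin N) :
    |dyCenter N (k - 1) (dyParentIdx m) i - dyCenter N k m i| ≤ dySide k / 2 := by
  have hdiv : (2 : ℝ) * ((m i).fdiv 2 : ℤ) + ((m i % 2 : ℤ) : ℝ) = m i := by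
    rw [Int.fdiv_eq_ediv_of_nonneg _ zero_le_two]
    exact_mod_cast Int.mul_ediv_add_emod (m i) 2
  have hdiff : dyCenter N (k - 1) (dyParentIdx m) i - dyCenter N k m i
      = (1 / 2 - ((m i % 2 : ℤ) : ℝ)) * dySide k := by
    have hside := dySide_sub_one k
    simp only [dySide] at hside
    simp only [dyCenter, dyParentIdx, dySide, hside]
    linear_combination (2 : ℝ) ^ (-k) * hdiv
  rw [hdiff, abs_mul, abs_of_pos (dySide_pos k)]
  rcases Int.emod_two_eq_zero_or_one (m i) with h | h <;> rw [h] <;> norm_num <;> linarith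

theorem parent_cube_subset (N : ℕ) (η : ℝ) (k : ℤ) (m : Fin N → ℤ) :
    cube (dyCenter N (k - 1) (dyParentIdx m)) (η * dySide (k - 1)) ⊆
      cube (dyCenter N k m) ((2 * η + 1) * dySide k) :=
  cube_subset_cube fun i =>
    (abs_dyCenter_parent_sub_le N k m i).trans_eq (by rw [dySide_sub_one]; ring)

theorem memQcal.sub_mul_dySide_lt {N : ℕ} {Ω : Set (EuclideanSpace ℝ (Fin N))}
    {η η' : ℝ} {k k' : ℤ} {m m' : Fin N → ℤ}
    (hQ : memQcal Ω η k m) (hQ' : memQcal Ω η k' m')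
    (hmeet : (cube (dyCenter N k m) (η' * dySide k) ∩
      cube (dyCenter N k' m') (η' * dySide k')).Nonempty) :
    (η - η') * dySide k' < (2 * η + 1 + η') * dySide k := by
  by_contra! hle
  apply hQ.2
  calc cube (dyCenter N (k - 1) (dyParentIdx m)) (η * dySide (k - 1))
      ⊆ cube (dyCenter N k m) ((2 * η + 1) * dySide k) := parent_cube_subset N η k m
    _ ⊆ cube (dyCenter N k' m') ((2 * η + 1) * dySide k + η' * dySide k + η' * dySide k') :=
      cube_subset_cube_of_inter_nonempty hmeet _
    _ ⊆ cube (dyCenter N k' m') (η * dySide k') := cube_mono _ (by linarith)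
    _ ⊆ Ω := hQ'.1

theorem whitney_cube_sides_comparable_general (N : ℕ) (hN : 1 ≤ N) (η η' : ℝ)
    (hη'1 : 1 < η') (hηη' : η' < η / Real.sqrt N)
    (Ω : Set (EuclideanSpace ℝ (Fin N)))
    (k k' : ℤ) (m m' : Fin N → ℤ)
    (hQ : memQcal Ω η k m) (hQ' : memQcal Ω η k' m')
    (hmeet : (cube (dyCenter N k m) (η' * dySide k) ∩
      cube (dyCenter N k' m') (η' * dySide k')).Nonempty) :
    dySide k' < (Real.sqrt N * (2 * η + 1 + η') / (η - η' * Real.sqrt N)) * dySide k := by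
  have hbound := hQ.sub_mul_dySide_lt hQ' hmeet
  have hsqrt : 1 ≤ Real.sqrt N := Real.one_le_sqrt.mpr (by exact_mod_cast hN)
  have hgap : 0 < η - η' * Real.sqrt N := by
    rw [lt_div_iff₀ (by linarith)] at hηη'
    linarith
  have hη' : 0 ≤ η' := by linarith
  have hs := (dySide_pos k).le
  have hs' := (dySide_pos k').le
  have hA : 0 ≤ 2 * η + 1 + η' := by
    have := mul_nonneg hη' (zero_le_one.trans hsqrt)
    linarith
  rw [div_mul_eq_mul_div, lt_div_iff₀ hgap]
  calc dySide k' * (η - η' * Real.sqrt N)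
        = (η - η') * dySide k' - η' * (Real.sqrt N - 1) * dySide k' := by ring
    _ ≤ (η - η') * dySide k' :=
        sub_le_self _ (mul_nonneg (mul_nonneg hη' (sub_nonneg.2 hsqrt)) hs')
    _ < (2 * η + 1 + η') * dySide k := hbound
    _ ≤ Real.sqrt N * (2 * η + 1 + η') * dySide k := by
        rw [mul_assoc]
        exact le_mul_of_one_le_left (mul_nonneg hA hs) hsqrt

/-- **Lemma 9, first part.** Fix `N ≥ 1` and constants `η, η'` with `η/√N > η' > 1`, and
let `Ω ⊂ ℝ^N` be an open domain with `∂Ω ≠ ∅`.  Set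
`c₆ = √N (2η + 1 + η')/(η − η'√N)`.  If `Q(x, s)` and `Q'(x', s')` belong to the Whitney
family `𝒬`, their dilates `Q(x, η's)` and `Q'(x', η's')` intersect, and `s < s'`, then
`s < s' < c₆ s`. -/
theorem whitney_cube_sides_comparable (N : ℕ) (hN : 1 ≤ N) (η η' : ℝ)
    (hη'1 : 1 < η') (hηη' : η' < η / Real.sqrt N)
    (Ω : Set (EuclideanSpace ℝ (Fin N))) (hΩ : IsOpen Ω) (hfr : (frontier Ω).Nonempty)
    (k k' : ℤ) (m m' : Fin N → ℤ)
    (hQ : memQcal Ω η k m) (hQ' : memQcal Ω η k' m')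
    (hmeet : (cube (dyCenter N k m) (η' * dySide k) ∩
      cube (dyCenter N k' m') (η' * dySide k')).Nonempty)
    (hss' : dySide k < dySide k') :
    dySide k' < (Real.sqrt N * (2 * η + 1 + η') / (η - η' * Real.sqrt N)) * dySide k :=
  whitney_cube_sides_comparable_general N hN η η' hη'1 hηη' Ω k k' m m' hQ hQ' hmeet
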